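/- If the generalized first Tits construction J(A,μ) (μ ∈ A^×) is a division algebra, then A is a division algebra and μ ∉ N_A(A^×)·1. -/
import Mathlib


/-- A separable associative algebra of degree three over `F`:
an associative unital `F`-algebra `A` equipped with a cubic norm `NA`,
directional derivative `Ndir x y = N_A(x;y)` (the coefficient of `Z` in
`N_A(x+Zy)`), trace `TA`, quadratic form `SA`, adjoint `sharp` and bilinear
trace `Tbil`, satisfying the degree-3 identity, the trace-sharp formula and
the trace-product formula. -/
structure DegreeThreeAlg (F A : Type*) [Field F] [Ring A] [Algebra F A] where
  NA : A → F
  Ndir : A → A → F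
  TA : A → F
  SA : A → F
  sharp : A → A
  Tbil : A → A → F
  NA_one : NA 1 = 1
  NA_smul : ∀ (c : F) (x : A), NA (c • x) = c ^ 3 * NA x
  Ndir_expand : ∀ (x y : A) (z : F),
    NA (x + z • y) = NA x + z * Ndir x y + z ^ 2 * Ndir y x + z ^ 3 * NA y
  Ndir_add_right : ∀ x y z : A, Ndir x (y + z) = Ndir x y + Ndir x z
  Ndir_smul_right : ∀ (x : A) (c : F) (y : A), Ndir x (c • y) = c * Ndir x y
  TA_def : ∀ x : A, TA x = Ndir 1 x
  SA_def : ∀ x : A, SA x = Ndir x 1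
  sharp_def : ∀ x : A, sharp x = x ^ 2 - TA x • x + SA x • (1 : A)
  Tbil_def : ∀ x y : A,
    Tbil x y = TA x * TA y - (Ndir (1 + y) x - Ndir 1 x - Ndir y x)
  degree3 : ∀ x : A, x ^ 3 - TA x • x ^ 2 + SA x • x - NA x • (1 : A) = 0
  trace_sharp : ∀ x y : A, Tbil (sharp x) y = Ndir x y
  trace_product : ∀ x y : A, Tbil x y = TA (x * y)

variable {F A : Type*} [Field F] [Ring A] [Algebra F A]

/-- Conjugation `x̄ = ½(T_A(x)·1 − x)` in `A`. -/
noncomputable def bar (D : DegreeThreeAlg F A) (x : A) : A :=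
  (2 : F)⁻¹ • (D.TA x • (1 : A) - x)

/-- Linearization of the adjoint in `A`: `x ♯ y = (x+y)^♯ − x^♯ − y^♯`. -/
noncomputable def sharpBil (D : DegreeThreeAlg F A) (x y : A) : A :=
  D.sharp (x + y) - D.sharp x - D.sharp y

/-- `x × y = ½ (x ♯ y)` in `A`. -/
noncomputable def cross (D : DegreeThreeAlg F A) (x y : A) : A :=
  (2 : F)⁻¹ • sharpBil D x y

/-- Multiplication of the generalized first Tits construction `J(A,μ)` on `A ⊕ A ⊕ A`. -/
noncomputable def Jmul (D : DegreeThreeAlg F A) (μ : Aˣ) (x y : A × A × A) : A × A × A :=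
  ((2 : F)⁻¹ • (x.1 * y.1 + y.1 * x.1) + bar D (x.2.1 * y.2.2) + bar D (y.2.1 * x.2.2),
   bar D x.1 * y.2.1 + bar D y.1 * x.2.1 + (↑μ⁻¹ : A) * cross D x.2.2 y.2.2,
   x.2.2 * bar D y.1 + y.2.2 * bar D x.1 + (↑μ : A) * cross D x.2.1 y.2.1)

/-- Adjoint on `J(A,μ)`. -/
noncomputable def Jsharp (D : DegreeThreeAlg F A) (μ : Aˣ) (x : A × A × A) : A × A × A :=
  (D.sharp x.1 - x.2.1 * x.2.2,
   (↑μ⁻¹ : A) * D.sharp x.2.2 - x.1 * x.2.1,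
   (↑μ : A) * D.sharp x.2.1 - x.2.2 * x.1)

/-- Sharp map on `J(A,μ)`: linearization of the adjoint. -/
noncomputable def JsharpBil (D : DegreeThreeAlg F A) (μ : Aˣ) (x y : A × A × A) : A × A × A :=
  Jsharp D μ (x + y) - Jsharp D μ x - Jsharp D μ y

/-- Generalized trace on `J(A,μ)`. -/
def JT (D : DegreeThreeAlg F A) (x : A × A × A) : F := D.TA x.1

/-- Generalized bilinear trace on `J(A,μ)`. -/
def JTbil (D : DegreeThreeAlg F A) (x y : A × A × A) : F :=
  D.TA (x.1 * y.1) + D.TA (x.2.1 * y.2.2) + D.TA (x.2.2 * y.2.1)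

/-- Generalized cubic norm `N : J(A,μ) → A`. -/
noncomputable def JN (D : DegreeThreeAlg F A) (μ : Aˣ) (x : A × A × A) : A :=
  D.NA x.1 • (1 : A) + D.NA x.2.1 • (↑μ : A) + D.NA x.2.2 • (↑μ⁻¹ : A)
    - D.TA (x.1 * x.2.1 * x.2.2) • (1 : A)

/-- The unit `1 = (1,0,0)` of `J(A,μ)`. -/
def Jone : A × A × A := ((1 : A), (0 : A), (0 : A))

section Aux

variable (D : DegreeThreeAlg F A)

lemma aux_Ndir_zero_right (x : A) : D.Ndir x 0 = 0 := by
  have h := D.Ndir_smul_right x 0 0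
  simpa using h

lemma aux_NA_zero : D.NA 0 = 0 := by
  have h := D.NA_smul 0 1
  simpa using h

lemma aux_Ndir_zero_left (y : A) : D.Ndir 0 y = 0 := by
  have h := D.Ndir_expand 0 y 1
  simpa [aux_NA_zero, aux_Ndir_zero_right] using h

lemma aux_TA_zero : D.TA 0 = 0 := by
  rw [D.TA_def, aux_Ndir_zero_right]

lemma aux_SA_zero : D.SA 0 = 0 := by
  rw [D.SA_def, aux_Ndir_zero_left]

lemma aux_sharp_zero : D.sharp 0 = 0 := by
  rw [D.sharp_def, aux_TA_zero, aux_SA_zero]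
  simp

lemma aux_bar_zero : bar D 0 = 0 := by
  simp [bar, aux_TA_zero]

lemma aux_cross_zero_left (z : A) : cross D 0 z = 0 := by
  simp [cross, sharpBil, aux_sharp_zero]

lemma aux_cross_zero_right (z : A) : cross D z 0 = 0 := by
  simp [cross, sharpBil, aux_sharp_zero]

lemma aux_TA_add (x y : A) : D.TA (x + y) = D.TA x + D.TA y := by
  rw [D.TA_def, D.TA_def, D.TA_def, D.Ndir_add_right]

lemma aux_TA_smul (c : F) (x : A) : D.TA (c • x) = c * D.TA x := by
  rw [D.TA_def, D.TA_def, D.Ndir_smul_right]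

lemma aux_TA_neg (x : A) : D.TA (-x) = - D.TA x := by
  have h := aux_TA_smul D (-1) x
  simpa using h

lemma aux_TA_one (h2 : (2 : F) ≠ 0) : D.TA 1 = 3 := by
  have h := D.Ndir_expand 1 1 1
  have e : ((1 : A) + (1 : F) • (1 : A)) = (2 : F) • (1 : A) := by
    rw [one_smul]
    rw [show (2 : F) = 1 + 1 by norm_num, add_smul, one_smul]
  rw [e, D.NA_smul, D.NA_one] at h
  norm_num at h
  rw [D.TA_def]
  have key : (2 : F) * D.Ndir 1 1 = 2 * 3 := by linear_combination -h
  exact mul_left_cancel₀ h2 key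

lemma aux_SA_one (h2 : (2 : F) ≠ 0) : D.SA 1 = 3 := by
  rw [D.SA_def, ← D.TA_def]
  exact aux_TA_one D h2

/-- `x · x^♯ = N(x) · 1`. -/
lemma aux_mul_sharp (x : A) : x * D.sharp x = D.NA x • (1 : A) := by
  have h := D.degree3 x
  have exp : x * D.sharp x = x ^ 3 - D.TA x • x ^ 2 + D.SA x • x := by
    rw [D.sharp_def, mul_add, mul_sub, mul_smul_comm, mul_smul_comm, mul_one]
    have h1 : x * x ^ 2 = x ^ 3 := by noncomm_ring
    have h2 : x * x = x ^ 2 := by noncomm_ring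
    rw [h1, h2]
  rw [exp, ← sub_eq_zero]
  simpa using h

/-- `x^♯ · x = N(x) · 1`. -/
lemma aux_sharp_mul (x : A) : D.sharp x * x = D.NA x • (1 : A) := by
  have h := D.degree3 x
  have exp : D.sharp x * x = x ^ 3 - D.TA x • x ^ 2 + D.SA x • x := by
    rw [D.sharp_def, add_mul, sub_mul, smul_mul_assoc, smul_mul_assoc, one_mul]
    have h1 : x ^ 2 * x = x ^ 3 := by noncomm_ring
    have h2 : x * x = x ^ 2 := by noncomm_ring
    rw [h1, h2]
  rw [exp, ← sub_eq_zero]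
  simpa using h

lemma aux_TA_sharp (a : A) : D.TA (D.sharp a) = D.SA a := by
  have h1 := D.trace_sharp a 1
  have h2 := D.trace_product (D.sharp a) 1
  rw [mul_one] at h2
  rw [← h2, h1, ← D.SA_def]

lemma aux_SA_one_add (h2 : (2 : F) ≠ 0) (a : A) :
    D.SA (1 + a) = D.SA a + 2 * D.TA a + 3 := by
  have e1 := D.Tbil_def 1 a
  have e2 := D.trace_product 1 a
  rw [one_mul] at e2
  have h11 : D.Ndir 1 1 = 3 := by rw [← D.TA_def]; exact aux_TA_one D h2
  have hT1 : D.TA 1 = 3 := aux_TA_one D h2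
  have hNa1 : D.Ndir a 1 = D.SA a := (D.SA_def a).symm
  have hS : D.SA (1 + a) = D.Ndir (1 + a) 1 := D.SA_def _
  rw [e2, hT1, h11, hNa1] at e1
  rw [hS]
  linear_combination e1

lemma aux_sharpBil_one (h2 : (2 : F) ≠ 0) (a : A) :
    sharpBil D 1 a = D.TA a • (1 : A) - a := by
  unfold sharpBil
  rw [D.sharp_def (1 + a), D.sharp_def 1, D.sharp_def a]
  rw [aux_TA_add, aux_TA_one D h2, aux_SA_one_add D h2, aux_SA_one D h2]
  have hsq : (1 + a) ^ 2 = 1 + a + a + a ^ 2 := by noncomm_ring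
  have hsq1 : (1 : A) ^ 2 = 1 := by noncomm_ring
  rw [hsq, hsq1]
  module

lemma aux_cross_one (h2 : (2 : F) ≠ 0) (a : A) : cross D 1 a = bar D a := by
  rw [cross, bar, aux_sharpBil_one D h2]

lemma aux_bar_neg (x : A) : bar D (-x) = - bar D x := by
  rw [bar, bar, aux_TA_neg]
  module

lemma aux_bar_smul_one (h2 : (2 : F) ≠ 0) (c : F) :
    bar D (c • (1 : A)) = c • (1 : A) := by
  rw [bar, aux_TA_smul, aux_TA_one D h2, ← sub_smul, smul_smul]
  have h : (2 : F)⁻¹ * (c * 3 - c) = c := by field_simp; ring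
  rw [h]

lemma aux_bar_sharp (a : A) : bar D (D.sharp a) = bar D a * a := by
  rw [bar, bar, aux_TA_sharp, D.sharp_def, smul_mul_assoc, sub_mul, smul_mul_assoc,
    one_mul, ← sq]
  module

lemma aux_Jmul_left (μ : Aˣ) (b : A) (y : A × A × A) :
    Jmul D μ (b, 0, 0) y =
      ((2 : F)⁻¹ • (b * y.1 + y.1 * b), bar D b * y.2.1, y.2.2 * bar D b) := by
  simp [Jmul, aux_bar_zero, aux_cross_zero_left, aux_cross_zero_right]

lemma aux_Jmul_zero (μ : Aˣ) (x : A × A × A) : Jmul D μ x 0 = 0 := by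
  simp [Jmul, aux_bar_zero, aux_cross_zero_left, aux_cross_zero_right, Prod.ext_iff]

end Aux

/-- If `J(A,μ)` (μ ∈ A^×) is a division algebra, then `A` is a division algebra
and `μ ∉ N_A(A^×)·1`. -/
theorem Jdivision_necessary (F A : Type*) [Field F] [Ring A] [Algebra F A]
    (h2 : (2 : F) ≠ 0) (h3 : (3 : F) ≠ 0) (D : DegreeThreeAlg F A) (μ : Aˣ)
    (hdiv : ∀ x : A × A × A, x ≠ 0 →
      Function.Bijective (fun y => Jmul D μ x y) ∧
      Function.Bijective (fun y => Jmul D μ y x)) :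
    (∀ a : A, a ≠ 0 →
      Function.Bijective (fun b : A => a * b) ∧ Function.Bijective (fun b : A => b * a)) ∧
    (∀ a : Aˣ, (↑μ : A) ≠ D.NA (↑a : A) • (1 : A)) := by
  constructor
  · -- A is a division algebra
    intro a ha
    have hbar : bar D (D.TA a • (1 : A) + (-2 : F) • a) = a := by
      rw [bar, aux_TA_add, aux_TA_smul, aux_TA_smul, aux_TA_one D h2]
      have hc : D.TA a * 3 + -2 * D.TA a = D.TA a := by ring
      rw [hc]
      match_scalars <;> field_simp <;> ring
    set b : A := D.TA a • (1 : A) + (-2 : F) • a with hb_def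
    have hb : b ≠ 0 := fun h0 => ha (by rw [← hbar, h0, aux_bar_zero])
    have hx : ((b, 0, 0) : A × A × A) ≠ 0 := fun h0 => hb (congrArg Prod.fst h0)
    obtain ⟨hinj, hsurj⟩ := (hdiv (b, 0, 0) hx).1
    constructor
    · constructor
      · intro c₁ c₂ hcc
        have hcc' : a * c₁ = a * c₂ := hcc
        have e : Jmul D μ (b, 0, 0) (0, c₁, 0) = Jmul D μ (b, 0, 0) (0, c₂, 0) := by
          rw [aux_Jmul_left, aux_Jmul_left, hbar]
          simp [hcc']
        exact congrArg (fun p => p.2.1) (hinj e)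
      · intro t
        obtain ⟨y, hy⟩ := hsurj (0, t, 0)
        refine ⟨y.2.1, ?_⟩
        have h := congrArg (fun p => p.2.1) hy
        simp only [aux_Jmul_left, hbar] at h
        exact h
    · constructor
      · intro c₁ c₂ hcc
        have hcc' : c₁ * a = c₂ * a := hcc
        have e : Jmul D μ (b, 0, 0) (0, 0, c₁) = Jmul D μ (b, 0, 0) (0, 0, c₂) := by
          rw [aux_Jmul_left, aux_Jmul_left, hbar]
          simp [hcc']
        exact congrArg (fun p => p.2.2) (hinj e)
      · intro t
        obtain ⟨y, hy⟩ := hsurj (0, 0, t)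
        refine ⟨y.2.2, ?_⟩
        have h := congrArg (fun p => p.2.2) hy
        simp only [aux_Jmul_left, hbar] at h
        exact h
  · -- μ is not a norm
    intro a hμ
    have h1A : (1 : A) ≠ 0 := by
      intro h0
      have h : D.NA 1 = D.NA 0 := by rw [h0]
      rw [D.NA_one, aux_NA_zero] at h
      exact one_ne_zero h
    haveI : Nontrivial A := ⟨⟨1, 0, h1A⟩⟩
    have ha0 : (↑a : A) ≠ 0 := Units.ne_zero a
    have has : (↑a : A) * D.sharp ↑a = D.NA (↑a : A) • 1 := aux_mul_sharp D ↑a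
    have hsa : D.sharp (↑a : A) * ↑a = D.NA (↑a : A) • 1 := aux_sharp_mul D ↑a
    have c1 : (2 : F)⁻¹ • ((-(↑a : A)) * D.sharp ↑a + D.sharp (↑a : A) * -(↑a : A))
        + bar D ((1 : A) * ↑μ) + bar D ((↑a : A) * 0) = 0 := by
      rw [neg_mul, mul_neg, has, hsa, one_mul, mul_zero, aux_bar_zero, hμ,
        aux_bar_smul_one D h2]
      match_scalars <;> field_simp <;> ring
    have c2 : bar D (-(↑a : A)) * ↑a + bar D (D.sharp ↑a) * 1
        + (↑μ⁻¹ : A) * cross D 0 ↑μ = 0 := by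
      rw [aux_bar_neg, mul_one, aux_cross_zero_left, mul_zero, neg_mul, aux_bar_sharp]
      abel
    have c3 : (0 : A) * bar D (D.sharp ↑a) + (↑μ : A) * bar D (-(↑a : A))
        + (↑μ : A) * cross D 1 ↑a = 0 := by
      rw [zero_mul, aux_bar_neg, aux_cross_one D h2, mul_neg]
      abel
    have hmul : Jmul D μ ((-(↑a : A), 1, 0) : A × A × A)
        ((D.sharp ↑a, (↑a : A), (↑μ : A)) : A × A × A) = 0 :=
      Prod.ext c1 (Prod.ext c2 c3)
    have hx : ((-(↑a : A), 1, 0) : A × A × A) ≠ 0 :=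
      fun h0 => h1A (congrArg (fun p => p.2.1) h0)
    have hy0 : ((D.sharp ↑a, (↑a : A), (↑μ : A)) : A × A × A) = 0 :=
      (hdiv _ hx).1.injective (by rw [hmul, aux_Jmul_zero])
    exact ha0 (congrArg (fun p => p.2.1) hy0)
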